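/- arXiv:1508.01062 — 3 statements merged into one kernel-verified Lean document; each statement's English description precedes it below -/
import Mathlib

section
/- There exists Δ₀ such that for every Δ ≥ Δ₀ the following holds: every simple graph G of maximum degree Δ contains a spanning subgraph H ⊆ G such that every vertex v with d_G(v) ≥ Δ/3 satisfies d_H(v) ≥ 2, and every vertex v satisfies d_H(v) ≤ 15·ln Δ. -/
/-!
Every vertex `u` of degree `d ≥ Δ/3` picks a neighbour `f u`, and then a second neighbour
`g u ≠ f u`. A vertex lies in at most `Δ` neighbourhoods while a chooser has `d ≥ Δ/3`
(resp. `d - 1 ≥ Δ/4`, as `d ≥ 4` for `Δ ≥ 10`) candidates, so Hall's theorem with capacities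
lets the picks be made such that no vertex is picked more than `3` (resp. `4`) times. In the
graph of all picks every vertex then has degree at most `2 + 3 + 4 = 9 ≤ 15 ln Δ`.
-/

open Finset

theorem Finset.card_le_mul_card_biUnion_of_load_le {ι α : Type*} [DecidableEq α]
    {s : Finset ι} {t : ι → Finset α} {d k : ℕ} (hd : 0 < d)
    (hload : ∀ a, #{i ∈ s | a ∈ t i} ≤ d) (hsize : ∀ i ∈ s, d ≤ k * #(t i)) :
    #s ≤ k * #(s.biUnion t) := by
  have hcount : ∑ i ∈ s, #(t i) = ∑ a ∈ s.biUnion t, #{i ∈ s | a ∈ t i} := by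
    simp only [card_eq_sum_ones]
    exact sum_comm' fun i a => by simp only [mem_filter, mem_biUnion]; grind
  refine le_of_mul_le_mul_right ?_ hd
  calc #s * d = ∑ i ∈ s, d := by rw [sum_const, smul_eq_mul]
    _ ≤ ∑ i ∈ s, k * #(t i) := sum_le_sum hsize
    _ = k * ∑ a ∈ s.biUnion t, #{i ∈ s | a ∈ t i} := by rw [← mul_sum, hcount]
    _ ≤ k * ∑ a ∈ s.biUnion t, d := by gcongr with a; exact hload a
    _ = k * #(s.biUnion t) * d := by rw [sum_const, smul_eq_mul, mul_assoc]

/-- Hall's theorem with capacity `k` at every point. -/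
theorem Finset.exists_mem_and_card_fiber_le_of_card_le_mul {ι α : Type*} [Fintype ι]
    [DecidableEq α] {t : ι → Finset α} {k : ℕ}
    (hall : ∀ s : Finset ι, #s ≤ k * #(s.biUnion t)) :
    ∃ g : ι → α, (∀ i, g i ∈ t i) ∧ ∀ a, #{i | g i = a} ≤ k := by
  have hcopies : ∀ s : Finset ι, #s ≤ #(s.biUnion fun i => t i ×ˢ (univ : Finset (Fin k))) := by
    intro s
    have hunion : (s.biUnion fun i => t i ×ˢ (univ : Finset (Fin k))) = s.biUnion t ×ˢ univ := by
      ext; simp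
    rw [hunion, card_product, card_univ, Fintype.card_fin, mul_comm]
    exact hall s
  obtain ⟨f, hf_inj, hf_mem⟩ := (all_card_le_biUnion_card_iff_exists_injective _).mp hcopies
  refine ⟨fun i => (f i).1, fun i => (mem_product.mp (hf_mem i)).1, fun a => ?_⟩
  calc #{i | (f i).1 = a} ≤ #(univ : Finset (Fin k)) :=
        card_le_card_of_injOn (fun i => (f i).2) (fun _ _ => mem_coe.mpr (mem_univ _))
          fun i hi j hj hij =>
            hf_inj (Prod.ext ((mem_filter.mp hi).2.trans (mem_filter.mp hj).2.symm) hij)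
    _ = k := by simp

namespace SimpleGraph

variable {V ι : Type*}

theorem card_filter_mem_le_degree (G : SimpleGraph V) [Fintype V] [DecidableRel G.Adj]
    [Fintype ι] {e : ι → V} (he : Function.Injective e) {t : ι → Finset V}
    (ht : ∀ i, t i ⊆ G.neighborFinset (e i)) (w : V) [DecidablePred fun i => w ∈ t i] :
    #{i | w ∈ t i} ≤ G.degree w := by
  refine card_le_card_of_injOn e (fun i hi => ?_) he.injOn
  have hw : w ∈ t i := (mem_filter.mp hi).2
  simpa [adj_comm] using ht i hw

def fromChoices (e f g : ι → V) : SimpleGraph V :=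
  fromRel fun a b => ∃ i, e i = a ∧ (f i = b ∨ g i = b)

variable {e f g : ι → V}

theorem fromChoices_le {G : SimpleGraph V} (hf : ∀ i, G.Adj (e i) (f i))
    (hg : ∀ i, G.Adj (e i) (g i)) : fromChoices e f g ≤ G := by
  rintro a b ⟨-, ⟨i, rfl, rfl | rfl⟩ | ⟨i, rfl, rfl | rfl⟩⟩
  exacts [hf i, hg i, (hf i).symm, (hg i).symm]

theorem two_le_ncard_neighborSet_fromChoices [Finite V] {i : ι} (hf : e i ≠ f i)
    (hg : e i ≠ g i) (hfg : f i ≠ g i) : 2 ≤ ((fromChoices e f g).neighborSet (e i)).ncard := by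
  have hpair : {f i, g i} ⊆ (fromChoices e f g).neighborSet (e i) := by
    rintro b (rfl | rfl)
    exacts [⟨hf, .inl ⟨i, rfl, .inl rfl⟩⟩, ⟨hg, .inl ⟨i, rfl, .inr rfl⟩⟩]
  calc 2 = ({f i, g i} : Set V).ncard := (Set.ncard_pair hfg).symm
    _ ≤ _ := Set.ncard_le_ncard hpair

theorem ncard_neighborSet_fromChoices_le [Fintype ι] [DecidableEq V]
    (he : Function.Injective e) (v : V) :
    ((fromChoices e f g).neighborSet v).ncard ≤ 2 + #{i | f i = v} + #{i | g i = v} := by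
  have hsub : (fromChoices e f g).neighborSet v ⊆
      ↑(({i | e i = v} : Finset ι).biUnion (fun i => {f i, g i}) ∪
        ({i | f i = v} : Finset ι).image e ∪ ({i | g i = v} : Finset ι).image e) := by
    rintro b ⟨-, ⟨i, rfl, hb⟩ | ⟨i, rfl, hv⟩⟩
    · exact mem_union_left _ (mem_union_left _ (mem_biUnion.mpr ⟨i, by simp, by grind⟩))
    · rcases hv with rfl | rfl
      · exact mem_union_left _ (mem_union_right _ (mem_image_of_mem e (by simp)))
      · exact mem_union_right _ (mem_image_of_mem e (by simp))
  have hown : #(({i | e i = v} : Finset ι).biUnion fun i => {f i, g i}) ≤ 2 := by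
    have hle : #({i | e i = v} : Finset ι) ≤ 1 :=
      card_le_one.mpr fun i hi j hj => he ((mem_filter.mp hi).2.trans (mem_filter.mp hj).2.symm)
    calc _ ≤ #({i | e i = v} : Finset ι) * 2 :=
          card_biUnion_le_card_mul _ _ _ fun i _ => card_le_two
      _ ≤ 2 := by omega
  calc _ ≤ _ := Set.ncard_le_ncard hsub (finite_toSet _)
    _ = _ := Set.ncard_coe_finset _
    _ ≤ _ := (card_union_le _ _).trans (add_le_add_left (card_union_le _ _) _)
    _ ≤ 2 + #{i | f i = v} + #{i | g i = v} :=
      add_le_add (add_le_add hown card_image_le) card_image_le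

theorem exists_choice_in_neighborFinset_card_fiber_le (G : SimpleGraph V) [Fintype V]
    [DecidableEq V] [DecidableRel G.Adj] [Fintype ι] {Δ k : ℕ} (hΔ : 0 < Δ)
    (hdeg : ∀ v, G.degree v ≤ Δ) {e : ι → V} (he : Function.Injective e)
    {t : ι → Finset V} (ht : ∀ i, t i ⊆ G.neighborFinset (e i))
    (hsize : ∀ i, Δ ≤ k * #(t i)) :
    ∃ g : ι → V, (∀ i, g i ∈ t i) ∧ ∀ v, #{i | g i = v} ≤ k := by
  refine exists_mem_and_card_fiber_le_of_card_le_mul fun s =>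
    card_le_mul_card_biUnion_of_load_le hΔ (fun w => ?_) fun i _ => hsize i
  calc #{i ∈ s | w ∈ t i} ≤ #{i | w ∈ t i} :=
        card_le_card (filter_subset_filter _ (subset_univ s))
    _ ≤ G.degree w := G.card_filter_mem_le_degree he ht w
    _ ≤ Δ := hdeg w

end SimpleGraph

open SimpleGraph in
/-- For sufficiently large `Δ`, every graph `G` of maximum degree `Δ` contains a
spanning subgraph `H` in which every vertex of `G`-degree at least `Δ/3` has degree
at least `2`, and every vertex has degree at most `15 ln Δ`. -/
theorem exists_sparse_spanning_subgraph :
    ∃ Δ₀ : ℕ, ∀ Δ : ℕ, Δ₀ ≤ Δ →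
    ∀ (V : Type) [Fintype V] [DecidableEq V] (G : SimpleGraph V) [DecidableRel G.Adj],
    G.maxDegree = Δ →
    ∃ H : SimpleGraph V, H ≤ G ∧
      (∀ v : V, (Δ : ℝ) / 3 ≤ (G.degree v : ℝ) → 2 ≤ (H.neighborSet v).ncard) ∧
      (∀ v : V, ((H.neighborSet v).ncard : ℝ) ≤ 15 * Real.log Δ) := by
  refine ⟨10, fun Δ hΔ V _ _ G _ hmax => ?_⟩
  have hdeg : ∀ v, G.degree v ≤ Δ := hmax ▸ G.degree_le_maxDegree
  let U := {v : V // Δ ≤ 3 * G.degree v}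
  obtain ⟨f, hf_mem, hf_fiber⟩ := G.exists_choice_in_neighborFinset_card_fiber_le (k := 3)
    (by omega) hdeg Subtype.val_injective (t := fun u : U => G.neighborFinset u)
    (fun _ => subset_rfl) fun u => u.2
  obtain ⟨g, hg_mem, hg_fiber⟩ := G.exists_choice_in_neighborFinset_card_fiber_le (k := 4)
    (by omega) hdeg Subtype.val_injective (t := fun u : U => (G.neighborFinset u).erase (f u))
    (fun _ => erase_subset _ _) fun u => by
      rw [card_erase_of_mem (hf_mem u), card_neighborFinset_eq_degree]
      have := u.2
      omega
  have hf_adj (u : U) : G.Adj u (f u) := (G.mem_neighborFinset _ _).mp (hf_mem u)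
  have hg_adj (u : U) : G.Adj u (g u) :=
    (G.mem_neighborFinset _ _).mp (mem_of_mem_erase (hg_mem u))
  refine ⟨fromChoices Subtype.val f g, fromChoices_le hf_adj hg_adj, fun v hv => ?_, fun v => ?_⟩
  · have hv : Δ ≤ 3 * G.degree v := by exact_mod_cast (by linarith : (Δ : ℝ) ≤ 3 * G.degree v)
    exact two_le_ncard_neighborSet_fromChoices (i := (⟨v, hv⟩ : U)) (hf_adj _).ne (hg_adj _).ne
      (ne_of_mem_erase (hg_mem _)).symm
  · have hnine : ((fromChoices Subtype.val f g).neighborSet v).ncard ≤ 9 :=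
      (ncard_neighborSet_fromChoices_le Subtype.val_injective v).trans
        (by linarith [hf_fiber v, hg_fiber v])
    have hΔ' : (10 : ℝ) ≤ Δ := by exact_mod_cast hΔ
    have hlog : 1 ≤ Real.log Δ :=
      (Real.le_log_iff_exp_le (by positivity)).mpr (by linarith [Real.exp_one_lt_d9])
    have : (((fromChoices Subtype.val f g).neighborSet v).ncard : ℝ) ≤ 9 := by exact_mod_cast hnine
    linarith
end

section
/- Let A₁, A₂, …, Aₙ be events in a probability space. Suppose there is an integer D ≥ 0 and a real p ≥ 0 such that each event Aᵢ is mutually independent of all but at most D of the other events A_j, and Pr(Aᵢ) ≤ p for all 1 ≤ i ≤ n. If e·p·(D+1) ≤ 1, then Pr(⋂_{i=1}^{n} Aᵢᶜ) > 0. -/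
/-!
Put `x = 1/(D+2)` (rather than `1/(D+1)`, which is `1` when `D = 0`), so that `e·p·(D+1) ≤ 1`
gives `Pr(Aᵢ) ≤ x(1-x)^D`. By strong induction on `S`, `Pr(Aᵢ | none of A_j, j ∈ S) ≤ x` for
every `i`: split `S` into the indices `S₁` inside `Γ i` and `S₂` outside it; independence from
`S₂` bounds the numerator by `Pr(Aᵢ)·Pr(none of S₂)`, and adding the at most `D` events of `S₁`
back one at a time keeps at least a `(1-x)`-fraction of the denominator each time, by the
induction hypothesis. Adding all `n` events to the empty set the same way gives
`Pr(none of the Aᵢ) ≥ (1-x)^n > 0`.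
-/

open MeasureTheory

section

open Finset

lemma le_inv_add_two_mul_one_sub_inv_pow_of_exp_mul_le {p : ℝ} {D : ℕ}
    (h : Real.exp 1 * p * (D + 1) ≤ 1) :
    p ≤ ((D : ℝ) + 2)⁻¹ * (1 - ((D : ℝ) + 2)⁻¹) ^ D := by
  have he : (1 + ((D : ℝ) + 1)⁻¹) ^ (D + 1) ≤ Real.exp 1 := by
    simpa using Real.one_add_inv_pow_le_exp (n := D + 1)
  have h₁ : 1 + ((D : ℝ) + 1)⁻¹ = (D + 2) / (D + 1) := by field_simp; ring
  have h₂ : 1 - ((D : ℝ) + 2)⁻¹ = (D + 1) / (D + 2) := by field_simp; ring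
  calc p ≤ (((D : ℝ) + 1) * Real.exp 1)⁻¹ := by
        rw [← one_div, le_div_iff₀ (by positivity)]
        linarith
    _ ≤ (((D : ℝ) + 1) * (1 + ((D : ℝ) + 1)⁻¹) ^ (D + 1))⁻¹ := by gcongr
    _ = ((D : ℝ) + 2)⁻¹ * (1 - ((D : ℝ) + 2)⁻¹) ^ D := by
        rw [h₁, h₂, div_pow, div_pow]
        field_simp
        ring

variable {Ω ι : Type*} {A : ι → Set Ω}

def noneOf (A : ι → Set Ω) (S : Finset ι) : Set Ω := ⋂ j ∈ S, (A j)ᶜ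

@[simp]
lemma noneOf_empty : noneOf A ∅ = Set.univ := by simp [noneOf]

lemma noneOf_insert [DecidableEq ι] (k : ι) (S : Finset ι) :
    noneOf A (insert k S) = noneOf A S \ A k := by
  rw [noneOf, set_biInter_insert, Set.inter_comm, Set.sdiff_eq, noneOf]

lemma noneOf_anti {S T : Finset ι} (h : S ⊆ T) : noneOf A T ⊆ noneOf A S :=
  Set.biInter_subset_biInter_left h

lemma inter_noneOf_of_mem {i : ι} {S : Finset ι} (hi : i ∈ S) : A i ∩ noneOf A S = ∅ :=
  Set.eq_empty_of_forall_notMem fun _ ⟨hωi, hωS⟩ ↦ Set.mem_iInter₂.mp hωS i hi hωi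

variable [MeasurableSpace Ω] {μ : Measure Ω} [IsFiniteMeasure μ] [DecidableEq ι] {x : ℝ}

lemma one_sub_mul_le_measureReal_noneOf_insert {k : ι} {S : Finset ι}
    (hAk : MeasurableSet (A k))
    (h : μ.real (A k ∩ noneOf A S) ≤ x * μ.real (noneOf A S)) :
    (1 - x) * μ.real (noneOf A S) ≤ μ.real (noneOf A (insert k S)) := by
  have hsplit := measureReal_sdiff_add_inter (μ := μ) (s := noneOf A S) hAk
  rw [Set.inter_comm] at hsplit
  rw [noneOf_insert]
  linarith

lemma one_sub_pow_mul_le_measureReal_noneOf_union (hA : ∀ i, MeasurableSet (A i))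
    (hx : x ≤ 1) (T S : Finset ι)
    (h : ∀ k ∈ T, ∀ R ⊆ T.erase k,
      μ.real (A k ∩ noneOf A (R ∪ S)) ≤ x * μ.real (noneOf A (R ∪ S))) :
    (1 - x) ^ #T * μ.real (noneOf A S) ≤ μ.real (noneOf A (T ∪ S)) := by
  induction T using Finset.induction_on with
  | empty => simp
  | @insert k T hkT ih =>
    have ih' := ih fun j hj R hR ↦
      h j (mem_insert_of_mem hj) R (hR.trans (erase_subset_erase j (subset_insert k T)))
    have hk := h k (mem_insert_self k T) T (erase_insert hkT).superset
    calc (1 - x) ^ #(insert k T) * μ.real (noneOf A S)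
        = (1 - x) * ((1 - x) ^ #T * μ.real (noneOf A S)) := by
          rw [card_insert_of_notMem hkT, pow_succ]; ring
      _ ≤ (1 - x) * μ.real (noneOf A (T ∪ S)) :=
          mul_le_mul_of_nonneg_left ih' (sub_nonneg.mpr hx)
      _ ≤ μ.real (noneOf A (insert k T ∪ S)) := by
          rw [insert_union]; exact one_sub_mul_le_measureReal_noneOf_insert (hA k) hk

lemma measureReal_inter_noneOf_le (hA : ∀ i, MeasurableSet (A i)) (hx₀ : 0 ≤ x) (hx₁ : x ≤ 1)
    (Γ : ι → Finset ι) {D : ℕ} (hΓ : ∀ i, #(Γ i) ≤ D)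
    (hindep : ∀ i S, (∀ j ∈ S, j ≠ i ∧ j ∉ Γ i) →
      μ (A i ∩ noneOf A S) = μ (A i) * μ (noneOf A S))
    (hbound : ∀ i, μ.real (A i) ≤ x * (1 - x) ^ D) (S : Finset ι) (i : ι) :
    μ.real (A i ∩ noneOf A S) ≤ x * μ.real (noneOf A S) := by
  induction S using Finset.strongInduction generalizing i with
  | H S ih =>
  by_cases hiS : i ∈ S
  · rw [inter_noneOf_of_mem hiS, measureReal_empty]
    positivity
  set S₁ := S.filter (· ∈ Γ i)
  set S₂ := S.filter (· ∉ Γ i)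
  have hS₂ : μ.real (A i ∩ noneOf A S₂) = μ.real (A i) * μ.real (noneOf A S₂) := by
    rw [measureReal_def, hindep i S₂ fun j hj ↦ ?_, ENNReal.toReal_mul]; rfl
    obtain ⟨hjS, hjΓ⟩ := mem_filter.mp hj
    exact ⟨ne_of_mem_of_not_mem hjS hiS, hjΓ⟩
  have hpeel : (1 - x) ^ #S₁ * μ.real (noneOf A S₂) ≤ μ.real (noneOf A (S₁ ∪ S₂)) := by
    refine one_sub_pow_mul_le_measureReal_noneOf_union hA hx₁ S₁ S₂ fun k hk R hR ↦ ih _ ?_ k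
    obtain ⟨hkS, hkΓ⟩ := mem_filter.mp hk
    refine (ssubset_iff_of_subset (union_subset ?_ (filter_subset _ S))).mpr
      ⟨k, hkS, ?_⟩
    · exact hR.trans ((erase_subset k S₁).trans (filter_subset _ S))
    · simp only [mem_union, not_or]
      exact ⟨fun hkR ↦ (mem_erase.mp (hR hkR)).1 rfl, fun hk₂ ↦ (mem_filter.mp hk₂).2 hkΓ⟩
  calc μ.real (A i ∩ noneOf A S)
      ≤ μ.real (A i ∩ noneOf A S₂) :=
        measureReal_mono (Set.inter_subset_inter_right _ (noneOf_anti (filter_subset _ S)))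
    _ = μ.real (A i) * μ.real (noneOf A S₂) := hS₂
    _ ≤ x * (1 - x) ^ #S₁ * μ.real (noneOf A S₂) := by
        gcongr
        refine (hbound i).trans (mul_le_mul_of_nonneg_left ?_ hx₀)
        exact pow_le_pow_of_le_one (by linarith) (by linarith)
          ((card_le_card fun j hj ↦ (mem_filter.mp hj).2).trans (hΓ i))
    _ ≤ x * μ.real (noneOf A (S₁ ∪ S₂)) := by rw [mul_assoc]; gcongr
    _ = x * μ.real (noneOf A S) := by rw [filter_union_filter_not_eq]

lemma one_sub_pow_card_mul_le_measureReal_noneOf (hA : ∀ i, MeasurableSet (A i)) (hx₀ : 0 ≤ x)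
    (hx₁ : x ≤ 1) (Γ : ι → Finset ι) {D : ℕ} (hΓ : ∀ i, #(Γ i) ≤ D)
    (hindep : ∀ i S, (∀ j ∈ S, j ≠ i ∧ j ∉ Γ i) →
      μ (A i ∩ noneOf A S) = μ (A i) * μ (noneOf A S))
    (hbound : ∀ i, μ.real (A i) ≤ x * (1 - x) ^ D) (S : Finset ι) :
    (1 - x) ^ #S * μ.real Set.univ ≤ μ.real (noneOf A S) := by
  simpa using one_sub_pow_mul_le_measureReal_noneOf_union hA hx₁ S ∅ fun k _ R _ ↦
    measureReal_inter_noneOf_le hA hx₀ hx₁ Γ hΓ hindep hbound _ k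

end

theorem lovasz_local_lemma_symmetric_general
    {Ω : Type*} [MeasurableSpace Ω] (μ : Measure Ω) [IsProbabilityMeasure μ]
    (n : ℕ) (A : Fin n → Set Ω) (hA : ∀ i, MeasurableSet (A i))
    (D : ℕ) (p : ℝ)
    (Γ : Fin n → Finset (Fin n))
    (hΓ : ∀ i, (Γ i).card ≤ D)
    (hindep : ∀ i : Fin n, ∀ S : Finset (Fin n),
      (∀ j ∈ S, j ≠ i ∧ j ∉ Γ i) →
      μ (A i ∩ ⋂ j ∈ S, (A j)ᶜ) = μ (A i) * μ (⋂ j ∈ S, (A j)ᶜ))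
    (hbound : ∀ i, (μ (A i)).toReal ≤ p)
    (hcond : Real.exp 1 * p * (D + 1) ≤ 1) :
    0 < μ (⋂ i, (A i)ᶜ) := by
  set x : ℝ := ((D : ℝ) + 2)⁻¹
  have hx₀ : 0 ≤ x := by positivity
  have hx₁ : x < 1 := inv_lt_one_of_one_lt₀ (by linarith)
  have hbound' (i : Fin n) : μ.real (A i) ≤ x * (1 - x) ^ D :=
    (hbound i).trans (le_inv_add_two_mul_one_sub_inv_pow_of_exp_mul_le hcond)
  have hnone := one_sub_pow_card_mul_le_measureReal_noneOf hA hx₀ hx₁.le Γ hΓ hindep hbound'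
    Finset.univ
  rw [probReal_univ, mul_one] at hnone
  have hpos : 0 < μ.real (noneOf A Finset.univ) := (pow_pos (sub_pos.mpr hx₁) _).trans_le hnone
  simpa [noneOf] using (ENNReal.toReal_pos_iff.mp hpos).1

/-- The symmetric Lovász Local Lemma. Each event `A i` is mutually independent of
all events `A j` with `j ≠ i` outside the dependency set `Γ i` of size at most `D`;
if `Pr(A i) ≤ p` for all `i` and `e·p·(D+1) ≤ 1`, then with positive probability
none of the events occurs. -/
theorem lovasz_local_lemma_symmetric
    {Ω : Type*} [MeasurableSpace Ω] (μ : Measure Ω) [IsProbabilityMeasure μ]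
    (n : ℕ) (A : Fin n → Set Ω) (hA : ∀ i, MeasurableSet (A i))
    (D : ℕ) (p : ℝ) (hp : 0 ≤ p)
    (Γ : Fin n → Finset (Fin n))
    (hΓ : ∀ i, (Γ i).card ≤ D)
    (hindep : ∀ i : Fin n, ∀ S : Finset (Fin n),
      (∀ j ∈ S, j ≠ i ∧ j ∉ Γ i) →
      μ (A i ∩ ⋂ j ∈ S, (A j)ᶜ) = μ (A i) * μ (⋂ j ∈ S, (A j)ᶜ))
    (hbound : ∀ i, (μ (A i)).toReal ≤ p)
    (hcond : Real.exp 1 * p * (D + 1) ≤ 1) :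
    0 < μ (⋂ i, (A i)ᶜ) :=
  lovasz_local_lemma_symmetric_general μ n A hA D p Γ hΓ hindep hbound hcond
end

section
/- Every connected simple graph with at least 3 vertices admits an edge labelling c : E → {1,2,3,4,5} such that Σ_{e∋u} c(e) ≠ Σ_{e∋v} c(e) for every edge uv ∈ E. -/
/-!
Fix a vertex `r` of degree at least `2` and order the vertices so that every vertex other
than the last one, `r`, has a later neighbour. Start with all labels equal to `3` and process
the vertices in order. A processed vertex `u` owns the window `{α u, α u + 2}` containing its
label sum, where the anchor `α u` is `≡ 0` or `1 (mod 4)`; windows with distinct anchors are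
then disjoint, and adjacent processed vertices have distinct anchors.

To process `v` with `k` earlier neighbours, move each earlier neighbour to the bottom or the top
of its window by changing the label of its edge to `v` by `0` or `± 2`, and change the label of
the edge from `v` to its first later neighbour by `0` or `-1`. This way `v` can reach every window
whose anchor lies in a certain interval of `2k + 3` integers; that interval contains `k + 1`
anchors, so `v` gets a window avoiding the anchors of its earlier neighbours. Labels on edges to
unprocessed vertices stay `3`, except that the edge to the first later neighbour may carry `2`
while its processed end sits at the bottom of its window; hence every later change keeps labels
in `{1, …, 5}`.

At `r` all neighbours are processed, and we only decide which of them end at the top of their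
windows; a counting argument, which needs `2 ≤ deg r`, makes the sum at `r` differ from all of
theirs.
-/

open Finset

def IsAnchor (a : ℤ) : Prop := a % 4 = 0 ∨ a % 4 = 1

theorem IsAnchor.ne_of_window {a a' x y : ℤ} (ha : IsAnchor a) (ha' : IsAnchor a')
    (hne : a ≠ a') (hx : x = a ∨ x = a + 2) (hy : y = a' ∨ y = a' + 2) : x ≠ y := by
  unfold IsAnchor at ha ha'
  omega

theorem exists_isAnchor_notMem (c : ℤ) (S : Finset ℤ) :
    ∃ a, IsAnchor a ∧ a ∉ S ∧ c ≤ a ∧ a ≤ c + 2 * #S + 2 := by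
  -- the anchors, in increasing order, are the numbers `2 n - n % 2`
  let anchor : ℕ → ℤ := fun j => 2 * ((c + 2) / 2 + j) - ((c + 2) / 2 + j) % 2
  have hinj : Set.InjOn anchor (range (#S + 1)) := fun j _ j' _ h => by
    simp only [anchor] at h
    omega
  obtain ⟨a, ha, haS⟩ := exists_mem_notMem_of_card_lt_card (s := S)
    (t := (range (#S + 1)).image anchor) (by rw [card_image_of_injOn hinj, card_range]; omega)
  obtain ⟨j, hj, rfl⟩ := mem_image.1 ha
  rw [mem_range] at hj
  refine ⟨_, ?_, haS, ?_, ?_⟩ <;> simp only [IsAnchor, anchor] <;> omega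

theorem exists_isAnchor_eq_add (s : ℤ) (k : ℕ) (S : Finset ℤ) (hS : #S ≤ k) :
    ∃ a, IsAnchor a ∧ a ∉ S ∧ ∃ u ≤ k, ∃ e b : ℤ,
      (e = 0 ∧ (b = 0 ∨ b = 2) ∨ e = -1 ∧ b = 0) ∧ s + 2 * u + e = a + b := by
  obtain ⟨a, ha, haS, hlo, hhi⟩ := exists_isAnchor_notMem (s - 2) S
  refine ⟨a, ha, haS, ?_⟩
  -- `a = s - 2` is reached at the top of its window, every other `a` exactly
  by_cases h : a = s - 2
  · exact ⟨0, Nat.zero_le _, 0, 2, by omega, by push_cast; omega⟩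
  · exact ⟨((a - s + 1) / 2).toNat, by omega, a - s - 2 * ((a - s + 1) / 2), 0, by omega,
      by omega⟩

section Counting

variable {ι : Type*}

theorem sum_card_filter_eq_le (J : Finset ι) (d : ι → ℤ) (t : Finset ℤ) :
    ∑ v ∈ t, #{j ∈ J | d j = v} ≤ #J :=
  (sum_card_fiberwise_eq_card_filter J t d).trans_le (card_filter_le _ _)

theorem exists_balanced_level (J : Finset ι) (d : ι → ℤ) (hJ : 2 ≤ #J) :
    ∃ w : ℕ, #{j ∈ J | d j = w} ≤ w ∧ w + #{j ∈ J | d j = w - 1} ≤ #J := by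
  -- Otherwise every level `v < #J` is occupied (an empty level `v` would overfill the levels
  -- `v - 1` and `v + 1` together) and some level twice: more than `#J` elements.
  by_contra! hbad
  set k := #J
  have hpair (x y : ℤ) (h : x ≠ y) : #{j ∈ J | d j = x} + #{j ∈ J | d j = y} ≤ k := by
    simpa [sum_pair h] using sum_card_filter_eq_le J d {x, y}
  have hpos (v : ℕ) (hv : v < k) : 1 ≤ #{j ∈ J | d j = v} := by
    by_contra! h0
    have hlo := hbad v (by omega)
    have hhi : v + 1 < #{j ∈ J | d j = ((v + 1 : ℕ) : ℤ)} := by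
      by_contra! h
      have := hbad (v + 1) h
      push_cast at this
      rw [add_sub_cancel_right] at this
      omega
    have := hpair (v - 1) ((v + 1 : ℕ) : ℤ) (by push_cast; omega)
    omega
  obtain ⟨v₀, hv₀, htwo⟩ : ∃ v < k, 2 ≤ #{j ∈ J | d j = v} := by
    by_cases h : #{j ∈ J | d j = ((k - 1 : ℕ) : ℤ)} ≤ k - 1
    · refine ⟨k - 2, by omega, ?_⟩
      have := hbad (k - 1) h
      rw [show ((k - 1 : ℕ) : ℤ) - 1 = ((k - 2 : ℕ) : ℤ) by omega] at this
      omega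
    · exact ⟨k - 1, by omega, by omega⟩
  have hmass := sum_card_filter_eq_le J d ((range k).map ⟨Nat.cast, Nat.cast_injective⟩)
  rw [sum_map] at hmass
  have : k + 1 ≤ ∑ v ∈ range k, #{j ∈ J | d j = v} :=
    calc k + 1 = ∑ v ∈ range k, (1 + if v = v₀ then 1 else 0) := by
          simp [sum_add_distrib, hv₀]
      _ ≤ _ := sum_le_sum fun v hv => by
          split_ifs with h
          · subst h; omega
          · simpa using hpos v (mem_range.1 hv)
  simp only [Function.Embedding.coeFn_mk] at hmass
  omega

theorem exists_subset_card_sub_ne [DecidableEq ι] (J : Finset ι) (hJ : 2 ≤ #J)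
    (d : ι → ℤ) :
    ∃ U ⊆ J, ∀ j ∈ J, (#U : ℤ) - (if j ∈ U then 1 else 0) ≠ d j := by
  obtain ⟨w, hA, hB⟩ := exists_balanced_level J d hJ
  obtain ⟨U, hAU, hUB, hU⟩ := exists_subsuperset_card_eq
    (s := {j ∈ J | d j = w}) (t := {j ∈ J | ¬d j = w - 1}) (n := w)
    (monotone_filter_right J fun j h => by omega) hA
    (by have := card_filter_add_card_filter_not (s := J) (fun j => d j = w - 1); omega)
  refine ⟨U, hUB.trans (filter_subset _ _), fun j hj => ?_⟩
  split_ifs with hjU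
  · have := (mem_filter.1 (hUB hjU)).2
    omega
  · have : d j ≠ w := fun h => hjU (hAU (mem_filter.2 ⟨hj, h⟩))
    omega

end Counting

theorem exists_antitone_rank {α β : Type*} [Fintype α] [LinearOrder β] (key : α → β) :
    ∃ idx : α → ℕ, ∀ a b, key a < key b → idx b < idx a := by
  refine ⟨fun a => #{x | key a < key x}, fun a b hab => card_lt_card ?_⟩
  refine (ssubset_iff_of_subset fun x hx => ?_).2 ⟨b, by simpa using hab, by simp⟩
  simp only [mem_filter, mem_univ, true_and] at hx ⊢
  exact hab.trans hx

variable {V : Type*}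

section StarShift

variable [DecidableEq V]

def starShift (v : V) (f : V → ℤ) : Sym2 V → ℤ :=
  Sym2.lift ⟨fun a b => if a = v then f b else if b = v then f a else 0,
    fun a b => by dsimp only; split_ifs <;> simp_all⟩

@[simp] theorem starShift_mk_left (v x : V) (f : V → ℤ) : starShift v f s(v, x) = f x := by
  simp [starShift]

theorem starShift_mk_of_ne {v a b : V} (f : V → ℤ) (ha : a ≠ v) (hb : b ≠ v) :
    starShift v f s(a, b) = 0 := by
  simp [starShift, ha, hb]

end StarShift

namespace SimpleGraph

variable {G : SimpleGraph V}

theorem Connected.exists_adj_dist_lt (hconn : G.Connected) {u r : V} (hur : u ≠ r) :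
    ∃ x, G.Adj u x ∧ G.dist x r < G.dist u r := by
  obtain ⟨p, hp⟩ := hconn.exists_walk_length_eq_dist u r
  cases p with
  | nil => exact absurd rfl hur
  | cons h q => exact ⟨_, h, (dist_le q).trans_lt (by rw [← hp, Walk.length_cons]; omega)⟩

theorem Connected.exists_order_with_later_neighbor [Fintype V] (hconn : G.Connected) (r : V) :
    ∃ idx : V → ℕ, Function.Injective idx ∧ (∀ u ≠ r, idx u < idx r) ∧
      ∀ u ≠ r, ∃ x, G.Adj u x ∧ idx u < idx x := by
  let e := Fintype.equivFin V
  let key : V → Lex (ℕ × Fin (Fintype.card V)) := fun u => toLex (G.dist u r, e u)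
  have hkey {u x : V} (h : G.dist x r < G.dist u r) : key x < key u :=
    Prod.Lex.toLex_lt_toLex.2 (Or.inl h)
  obtain ⟨idx, hidx⟩ := exists_antitone_rank key
  refine ⟨idx, fun a b hab => ?_, fun u hu => hidx _ _ (hkey ?_), fun u hu => ?_⟩
  · rcases lt_trichotomy (key a) (key b) with h | h | h
    · exact absurd hab (hidx _ _ h).ne'
    · exact e.injective (congrArg (fun p => (ofLex p).2) h)
    · exact absurd hab (hidx _ _ h).ne
  · simpa using hconn.pos_dist_of_ne hu
  · obtain ⟨x, hx, hlt⟩ := hconn.exists_adj_dist_lt hu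
    exact ⟨x, hx, hidx _ _ (hkey hlt)⟩

theorem label_mem_of_star {w w' : Sym2 V → ℤ} {v : V}
    (hw : ∀ e ∈ G.edgeSet, 1 ≤ w e ∧ w e ≤ 5)
    (hoff : ∀ x y, x ≠ v → y ≠ v → w' s(x, y) = w s(x, y))
    (hstar : ∀ x, G.Adj v x → 1 ≤ w' s(v, x) ∧ w' s(v, x) ≤ 5) :
    ∀ e ∈ G.edgeSet, 1 ≤ w' e ∧ w' e ≤ 5 := by
  intro e he
  induction e using Sym2.ind with
  | _ x y =>
  by_cases hx : x = v
  · subst hx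
    exact hstar y he
  by_cases hy : y = v
  · subst hy
    rw [Sym2.eq_swap]
    exact hstar x (G.mem_edgeSet.1 he).symm
  rw [hoff x y hx hy]
  exact hw _ he

variable [Fintype V] [DecidableRel G.Adj]

theorem exists_first_later_neighbor {idx : V → ℕ} {r : V}
    (hlater : ∀ u ≠ r, ∃ x, G.Adj u x ∧ idx u < idx x) :
    ∃ δ : V → V, ∀ u ≠ r, G.Adj u (δ u) ∧ idx u < idx (δ u) ∧
      ∀ x, G.Adj u x → idx u < idx x → idx (δ u) ≤ idx x := by
  have (u : V) : ∃ y, u ≠ r → G.Adj u y ∧ idx u < idx y ∧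
      ∀ x, G.Adj u x → idx u < idx x → idx y ≤ idx x := by
    by_cases hu : u = r
    · exact ⟨u, fun h => absurd hu h⟩
    obtain ⟨x, hx⟩ := hlater u hu
    obtain ⟨y, hy, hmin⟩ := exists_min_image {x | G.Adj u x ∧ idx u < idx x} idx
      ⟨x, by simpa using hx⟩
    simp only [mem_filter, mem_univ, true_and] at hy hmin
    exact ⟨y, fun _ => ⟨hy.1, hy.2, fun x h1 h2 => hmin x ⟨h1, h2⟩⟩⟩
  choose δ hδ using this
  exact ⟨δ, hδ⟩

theorem Connected.exists_two_le_degree [DecidableEq V] (hconn : G.Connected)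
    (hcard : 2 < Fintype.card V) : ∃ r, 2 ≤ G.degree r := by
  obtain ⟨x, r, y, hxr, hry, hxy⟩ : ∃ x r y, G.Adj x r ∧ G.Adj r y ∧ x ≠ y := by
    by_cases! hcomplete : ∀ u v, u ≠ v → G.Adj u v
    · obtain ⟨a, b, c, hab, hac, hbc⟩ := Fintype.two_lt_card_iff.1 hcard
      exact ⟨b, a, c, hcomplete _ _ hab.symm, hcomplete _ _ hac, hbc⟩
    · obtain ⟨u, v, huv, hnadj⟩ := hcomplete
      obtain ⟨p, hp⟩ := hconn.exists_walk_length_eq_dist u v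
      obtain ⟨x, a, b, hxa, hab, -, hxb⟩ :=
        p.exists_adj_adj_not_adj_ne hp (hconn.one_lt_dist_of_ne_of_not_adj huv hnadj)
      exact ⟨x, a, b, hxa, hab, hxb⟩
  refine ⟨r, ?_⟩
  rw [← card_neighborFinset_eq_degree, ← card_pair hxy]
  exact card_le_card fun z hz => by
    rcases mem_insert.1 hz with rfl | hz
    · simpa using hxr.symm
    · simpa [mem_singleton.1 hz] using hry

variable (G) in
def labelSum (w : Sym2 V → ℤ) (v : V) : ℤ := ∑ x ∈ G.neighborFinset v, w s(v, x)

theorem labelSum_add (w w' : Sym2 V → ℤ) (v : V) :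
    G.labelSum (w + w') v = G.labelSum w v + G.labelSum w' v :=
  sum_add_distrib

variable [DecidableEq V]

theorem labelSum_starShift_self (v : V) (f : V → ℤ) :
    G.labelSum (starShift v f) v = ∑ x ∈ G.neighborFinset v, f x := by
  simp [labelSum]

theorem labelSum_starShift_of_ne {u v : V} (f : V → ℤ) (huv : u ≠ v) :
    G.labelSum (starShift v f) u = if G.Adj u v then f u else 0 := by
  simp [labelSum, starShift, huv]

theorem labelSum_starShift_single {v y : V} (hvy : G.Adj v y) (e : ℤ) (u : V) :
    G.labelSum (starShift v (Pi.single y e)) u = if u = v ∨ u = y then e else 0 := by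
  by_cases huv : u = v
  · subst huv
    simp [labelSum_starShift_self, hvy]
  · rw [labelSum_starShift_of_ne _ huv]
    by_cases huy : u = y
    · subst huy
      simp [hvy.symm]
    · simp [huv, huy]

end SimpleGraph

namespace KKP

open SimpleGraph

variable [Fintype V]

/-- The state after processing the vertices of `P`: `α u` is the anchor of the window of `u`,
and `δ u` is the first later neighbour of `u`. -/
structure Invariant (G : SimpleGraph V) [DecidableRel G.Adj] (δ : V → V) (P : Finset V)
    (w : Sym2 V → ℤ) (α : V → ℤ) : Prop where
  label_mem : ∀ e ∈ G.edgeSet, 1 ≤ w e ∧ w e ≤ 5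
  labelSum_mem : ∀ u ∈ P, G.labelSum w u = α u ∨ G.labelSum w u = α u + 2
  isAnchor : ∀ u ∈ P, IsAnchor (α u)
  anchor_ne : ∀ u ∈ P, ∀ v ∈ P, G.Adj u v → α u ≠ α v
  pending : ∀ u x, x ∉ P → G.Adj u x →
    w s(u, x) = 3 ∨ u ∈ P ∧ x = δ u ∧ w s(u, x) = 2 ∧ G.labelSum w u = α u

variable {G : SimpleGraph V} [DecidableRel G.Adj] {δ : V → V} {P : Finset V}
  {w : Sym2 V → ℤ} {α : V → ℤ}

theorem invariant_empty (δ : V → V) : Invariant G δ ∅ (fun _ => 3) 0 :=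
  ⟨by simp, by simp, by simp, by simp, by simp⟩

theorem Invariant.label_eq_three (h : Invariant G δ P w α) {v x : V} (hv : v ∉ P) (hx : x ∉ P)
    (hvx : G.Adj v x) : w s(v, x) = 3 :=
  (h.pending v x hx hvx).resolve_right fun h => hv h.1

variable [DecidableEq V]

variable (G) in
def retarget (w : Sym2 V → ℤ) (α : V → ℤ) (B U : Finset V) (x : V) : ℤ :=
  if x ∈ B then α x + (if x ∈ U then 2 else 0) - G.labelSum w x else 0

theorem sum_retarget {B U s : Finset V} (hB : B ⊆ s) (hU : U ⊆ B) :
    ∑ x ∈ s, retarget G w α B U x = ∑ x ∈ B, (α x - G.labelSum w x) + 2 * #U := by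
  simp only [retarget]
  rw [sum_ite_mem, inter_eq_right.2 hB]
  simp only [sum_sub_distrib, sum_add_distrib, sum_ite_mem, inter_eq_right.2 hU, sum_const,
    Int.nsmul_eq_mul, mul_comm]
  ring

theorem labelSum_add_starShift_retarget {B U : Finset V} {u v : V}
    (hB : B ⊆ G.neighborFinset v) (huv : u ≠ v) :
    G.labelSum (w + starShift v (retarget G w α B U)) u =
      if u ∈ B then α u + (if u ∈ U then 2 else 0) else G.labelSum w u := by
  rw [labelSum_add, labelSum_starShift_of_ne _ huv]
  by_cases hu : u ∈ B
  · simp [retarget, hu, ((G.mem_neighborFinset _ _).1 (hB hu)).symm]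
  · simp [retarget, hu]

theorem Invariant.label_add_retarget_mem (h : Invariant G δ P w α) {v x : V} (hv : v ∉ P)
    (hx : x ∈ P) (hvx : G.Adj v x) (B U : Finset V) :
    1 ≤ w s(v, x) + retarget G w α B U x ∧ w s(v, x) + retarget G w α B U x ≤ 5 := by
  have hlabel := h.label_mem _ (G.mem_edgeSet.2 hvx)
  rw [Sym2.eq_swap] at hlabel ⊢
  simp only [retarget]
  rcases h.labelSum_mem x hx with h1 | h1 <;> rcases h.pending x v hv hvx.symm with h2 | h2 <;>
    split_ifs <;> omega

theorem Invariant.insert_of_star (h : Invariant G δ P w α) {v : V} (hv : v ∉ P)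
    {w' : Sym2 V → ℤ} {a : ℤ} (hoff : ∀ x y, x ≠ v → y ≠ v → w' s(x, y) = w s(x, y))
    (hstar : ∀ x, G.Adj v x → 1 ≤ w' s(v, x) ∧ w' s(v, x) ≤ 5)
    (hpend : ∀ x ∉ insert v P, G.Adj v x →
      w' s(v, x) = 3 ∨ x = δ v ∧ w' s(v, x) = 2 ∧ G.labelSum w' v = a)
    (ha : IsAnchor a) (haP : ∀ u ∈ P, G.Adj v u → α u ≠ a)
    (hsum_v : G.labelSum w' v = a ∨ G.labelSum w' v = a + 2)
    (hsum : ∀ u ∈ P, G.labelSum w' u = α u ∨ G.labelSum w' u = α u + 2)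
    (hlow : ∀ u ∈ P, δ u ∉ insert v P → G.labelSum w' u = G.labelSum w u) :
    Invariant G δ (insert v P) w' (Function.update α v a) := by
  have hne {u : V} (hu : u ∈ P) : u ≠ v := fun h => hv (h ▸ hu)
  refine ⟨label_mem_of_star h.label_mem hoff hstar, fun u hu => ?_, fun u hu => ?_,
    fun u hu x hx hux => ?_, fun u x hx hux => ?_⟩
  · rcases mem_insert.1 hu with rfl | hu
    · simpa using hsum_v
    · simpa [hne hu] using hsum u hu
  · rcases mem_insert.1 hu with rfl | hu
    · simpa using ha
    · simpa [hne hu] using h.isAnchor u hu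
  · rcases mem_insert.1 hu with rfl | huP
    · rcases mem_insert.1 hx with rfl | hxP
      · exact (G.irrefl hux).elim
      · simpa [hne hxP] using (haP x hxP hux).symm
    · rcases mem_insert.1 hx with rfl | hxP
      · simpa [hne huP] using haP u huP hux.symm
      · simpa [hne huP, hne hxP] using h.anchor_ne u huP x hxP hux
  · obtain ⟨hxv, hxP⟩ := not_or.1 (mem_insert.not.1 hx)
    by_cases huv : u = v
    · subst huv
      simpa using hpend x hx hux
    rw [hoff u x huv hxv]
    rcases h.pending u x hxP hux with h3 | ⟨huP, rfl, h2, hbot⟩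
    · exact Or.inl h3
    · exact Or.inr ⟨mem_insert_of_mem huP, rfl, h2, by simpa [huv, hlow u huP hx] using hbot⟩

theorem Invariant.labelSum_retarget_mem (h : Invariant G δ P w α) {B U : Finset V} {u v : V}
    (hB : B ⊆ G.neighborFinset v) (hu : u ∈ P) (huv : u ≠ v) :
    G.labelSum (w + starShift v (retarget G w α B U)) u = α u ∨
      G.labelSum (w + starShift v (retarget G w α B U)) u = α u + 2 := by
  rw [labelSum_add_starShift_retarget hB huv]
  split_ifs
  exacts [Or.inr rfl, Or.inl (add_zero _), h.labelSum_mem u hu]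

theorem Invariant.insert_retarget (h : Invariant G δ P w α) {v : V} (hv : v ∉ P)
    (hvδ : G.Adj v (δ v)) (hδv : δ v ∉ P) (hfirst : ∀ u ∈ P, G.Adj u v → δ u ∉ P → δ u = v)
    {U : Finset V} (hU : U ⊆ G.neighborFinset v ∩ P) {a e b : ℤ} (ha : IsAnchor a)
    (haP : ∀ u ∈ P, G.Adj v u → α u ≠ a) (heb : e = 0 ∧ (b = 0 ∨ b = 2) ∨ e = -1 ∧ b = 0)
    (hsum : G.labelSum w v + ∑ x ∈ G.neighborFinset v ∩ P, (α x - G.labelSum w x) + 2 * #U + e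
      = a + b) :
    Invariant G δ (insert v P) (w + starShift v (retarget G w α (G.neighborFinset v ∩ P) U) +
      starShift v (Pi.single (δ v) e)) (Function.update α v a) := by
  set B := G.neighborFinset v ∩ P
  have hB : B ⊆ G.neighborFinset v := inter_subset_left
  have hmemB {u : V} : u ∈ B ↔ u ∈ P ∧ G.Adj u v := by simp [B, adj_comm, and_comm]
  have hne {u : V} (hu : u ∈ P) : u ≠ v ∧ u ≠ δ v :=
    ⟨fun h => hv (h ▸ hu), fun h => hδv (h ▸ hu)⟩
  set w₁ := w + starShift v (retarget G w α B U)
  have hsum_v : G.labelSum (w₁ + starShift v (Pi.single (δ v) e)) v = a + b := by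
    rw [labelSum_add, labelSum_add, labelSum_starShift_self, labelSum_starShift_single hvδ,
      sum_retarget hB hU]
    simpa [add_assoc] using hsum
  have hsum_P {u : V} (hu : u ∈ P) :
      G.labelSum (w₁ + starShift v (Pi.single (δ v) e)) u = G.labelSum w₁ u := by
    rw [labelSum_add, labelSum_starShift_single hvδ, if_neg (by simpa using hne hu), add_zero]
  have hlabel_out {x : V} (hxP : x ∉ P) (hvx : G.Adj v x) :
      (w₁ + starShift v (Pi.single (δ v) e)) s(v, x) = 3 + if x = δ v then e else 0 := by
    simp [w₁, retarget, hmemB, hxP, h.label_eq_three hv hxP hvx, Pi.single_apply]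
  refine h.insert_of_star hv (fun x y hx hy => by simp [w₁, starShift_mk_of_ne _ hx hy])
    (fun x hx => ?_) (fun x hx hvx => ?_) ha haP (by omega)
    (fun u hu => hsum_P hu ▸ h.labelSum_retarget_mem hB hu (hne hu).1) fun u hu hδu => ?_
  · by_cases hxP : x ∈ P
    · simpa [w₁, (hne hxP).2] using h.label_add_retarget_mem hv hxP hx B U
    · rw [hlabel_out hxP hx]
      split_ifs <;> omega
  · rw [hlabel_out (not_or.1 (mem_insert.not.1 hx)).2 hvx]
    split_ifs with hxδ
    · rcases heb with ⟨rfl, -⟩ | ⟨rfl, rfl⟩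
      exacts [Or.inl (add_zero 3), Or.inr ⟨hxδ, rfl, by rw [hsum_v, add_zero]⟩]
    · exact Or.inl (add_zero 3)
  · have huB : u ∉ B := fun huB => hδu <| mem_insert.2 <| Or.inl <|
      hfirst u hu (hmemB.1 huB).2 fun h => hδu (mem_insert_of_mem h)
    rw [hsum_P hu, labelSum_add_starShift_retarget hB (hne hu).1, if_neg huB]

theorem Invariant.exists_insert (h : Invariant G δ P w α) {v : V} (hv : v ∉ P)
    (hvδ : G.Adj v (δ v)) (hδv : δ v ∉ P)
    (hfirst : ∀ u ∈ P, G.Adj u v → δ u ∉ P → δ u = v) :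
    ∃ w' α', Invariant G δ (insert v P) w' α' := by
  set B := G.neighborFinset v ∩ P
  obtain ⟨a, ha, haB, k, hk, e, b, heb, hsum⟩ := exists_isAnchor_eq_add
    (G.labelSum w v + ∑ x ∈ B, (α x - G.labelSum w x)) #B (B.image α) card_image_le
  obtain ⟨U, hUB, rfl⟩ := exists_subset_card_eq hk
  refine ⟨_, _, h.insert_retarget hv hvδ hδv hfirst hUB ha (fun u hu hvu hua => haB ?_) heb
    (by simpa [add_assoc] using hsum)⟩
  exact mem_image.2 ⟨u, mem_inter.2 ⟨(G.mem_neighborFinset _ _).2 hvu, hu⟩, hua⟩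

theorem exists_invariant_filter {idx : V → ℕ} (hinj : Function.Injective idx) {r : V}
    (hr : ∀ u ≠ r, idx u < idx r) (hδ : ∀ u ≠ r, G.Adj u (δ u) ∧ idx u < idx (δ u) ∧
      ∀ x, G.Adj u x → idx u < idx x → idx (δ u) ≤ idx x) :
    ∀ i ≤ idx r, ∃ w α, Invariant G δ (univ.filter (idx · < i)) w α := by
  intro i
  induction i with
  | zero => exact fun _ => ⟨_, _, by simpa using invariant_empty δ⟩
  | succ i ih =>
    intro hi
    obtain ⟨w, α, h⟩ := ih (by omega)
    by_cases! hv : ∀ v, idx v ≠ i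
    · have hP : univ.filter (idx · < i + 1) = univ.filter (idx · < i) :=
        filter_congr fun u _ => ⟨fun hu => lt_of_le_of_ne (Nat.lt_succ_iff.1 hu) (hv u),
          fun hu => by omega⟩
      exact ⟨w, α, hP ▸ h⟩
    obtain ⟨v, rfl⟩ := hv
    have hvr : v ≠ r := fun h => by subst h; omega
    have hP : univ.filter (idx · < idx v + 1) = insert v (univ.filter (idx · < idx v)) := by
      ext u
      simp only [mem_filter, mem_univ, true_and, mem_insert, Nat.lt_succ_iff_lt_or_eq,
        hinj.eq_iff, or_comm]
    obtain ⟨hvδ, hvδlt, -⟩ := hδ v hvr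
    rw [hP]
    refine h.exists_insert (by simp) hvδ (by simpa using hvδlt.le) fun u hu huv hδu => ?_
    simp only [mem_filter, mem_univ, true_and, not_lt] at hu hδu
    have hur : u ≠ r := fun h => by subst h; have := hr v hvr; omega
    exact hinj (le_antisymm ((hδ u hur).2.2 v huv hu) hδu)

theorem Invariant.exists_labelling {r : V} (h : Invariant G δ (univ.erase r) w α)
    (hr : 2 ≤ G.degree r) :
    ∃ w' : Sym2 V → ℤ, (∀ e ∈ G.edgeSet, 1 ≤ w' e ∧ w' e ≤ 5) ∧
      ∀ u v, G.Adj u v → G.labelSum w' u ≠ G.labelSum w' v := by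
  set B := G.neighborFinset r
  set s := G.labelSum w r + ∑ x ∈ B, (α x - G.labelSum w x)
  -- the new sums are `s + 2 #U` at `r` and `α x + 2 [x ∈ U]` at `x ∈ B`; when `α x - s` is odd
  -- they differ anyway, so rounding in `/ 2` is harmless
  obtain ⟨U, hUB, hU⟩ := exists_subset_card_sub_ne B hr fun x => (α x - s) / 2
  set w' := w + starShift r (retarget G w α B U)
  have hP {u : V} : u ∈ univ.erase r ↔ u ≠ r := by simp
  have hsum_r : G.labelSum w' r = s + 2 * #U := by
    rw [labelSum_add, labelSum_starShift_self, sum_retarget subset_rfl hUB, add_assoc]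
  have hne_r {x : V} (hx : G.Adj r x) : G.labelSum w' r ≠ G.labelSum w' x := by
    have hxB : x ∈ B := (G.mem_neighborFinset _ _).2 hx
    have := hU x hxB
    rw [hsum_r, labelSum_add_starShift_retarget subset_rfl hx.ne', if_pos hxB]
    split_ifs at this ⊢ <;> omega
  refine ⟨w', label_mem_of_star (v := r) h.label_mem
    (fun x y hx hy => by simp [w', starShift_mk_of_ne _ hx hy])
    (fun x hx => by simpa [w'] using h.label_add_retarget_mem (by simp) (hP.2 hx.ne') hx B U),
    fun u v huv => ?_⟩
  by_cases hu : u = r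
  · subst hu
    exact hne_r huv
  by_cases hv : v = r
  · subst hv
    exact (hne_r huv.symm).symm
  exact (h.isAnchor u (hP.2 hu)).ne_of_window (h.isAnchor v (hP.2 hv))
    (h.anchor_ne u (hP.2 hu) v (hP.2 hv) huv) (h.labelSum_retarget_mem subset_rfl (hP.2 hu) hu)
    (h.labelSum_retarget_mem subset_rfl (hP.2 hv) hv)

end KKP

/-- The 1–2–3 Conjecture with labels `{1, …, 5}` (Kalkowski–Karoński–Pfender):
every connected graph on at least `3` vertices admits an edge labelling with
`{1, 2, 3, 4, 5}` distinguishing adjacent vertices by the sums of their incident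
labels. -/
theorem kkp_five_labels {V : Type} [Fintype V] [DecidableEq V]
    (G : SimpleGraph V) [DecidableRel G.Adj]
    (hconn : G.Connected) (hcard : 3 ≤ Fintype.card V) :
    ∃ c : Sym2 V → ℕ,
      (∀ e ∈ G.edgeSet, c e ∈ Finset.Icc 1 5) ∧
      (∀ u v : V, G.Adj u v →
        ∑ w ∈ G.neighborFinset u, c s(u, w) ≠ ∑ w ∈ G.neighborFinset v, c s(v, w)) := by
  obtain ⟨r, hr⟩ := hconn.exists_two_le_degree hcard
  obtain ⟨idx, hinj, hidx, hlater⟩ := hconn.exists_order_with_later_neighbor r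
  obtain ⟨δ, hδ⟩ := SimpleGraph.exists_first_later_neighbor hlater
  obtain ⟨w, α, h⟩ := KKP.exists_invariant_filter hinj hidx hδ (idx r) le_rfl
  have hP : univ.filter (idx · < idx r) = univ.erase r := by
    ext u
    simpa using ⟨fun hu h => by subst h; omega, hidx u⟩
  obtain ⟨w, hmem, hne⟩ := (hP ▸ h).exists_labelling hr
  have hcast (y : V) :
      ((∑ x ∈ G.neighborFinset y, (w s(y, x)).toNat : ℕ) : ℤ) = G.labelSum w y := by
    push_cast
    refine sum_congr rfl fun x hx => Int.toNat_of_nonneg ?_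
    have := hmem _ (G.mem_edgeSet.2 ((G.mem_neighborFinset _ _).1 hx))
    omega
  refine ⟨fun e => (w e).toNat, fun e he => ?_, fun u v huv heq => hne u v huv ?_⟩
  · have := hmem e he
    simp only [mem_Icc]
    omega
  · rw [← hcast, ← hcast, heq]
end
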